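/- arXiv:1005.0882 — 3 statements merged into one kernel-verified Lean document; each statement's English description precedes it below -/
import Mathlib

section
/- Let U ∈ A(T)(l) for some l ≥ 1. Then ρ(U) = b'₁⋯b'_l with each b'ᵢ ∈ B; furthermore, if l > 1, then b'ᵢ ∈ A₁ ∪ C_{L₁} ∪ C_{L₂} for all 1 ≤ i ≤ l − 1. -/
/-- A rewriting system: every rule has nonempty left- and right-hand sides. -/
def IsRWS {α : Type*} (R : Set (List α × List α)) : Prop :=
  ∀ r ∈ R, r.1 ≠ [] ∧ r.2 ≠ []

/-- One-step reduction `W₁ →_R W₂`. -/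
def Step {α : Type*} (R : Set (List α × List α)) (W₁ W₂ : List α) : Prop :=
  ∃ Z₁ Z₂ X Y, (X, Y) ∈ R ∧ W₁ = Z₁ ++ X ++ Z₂ ∧ W₂ = Z₁ ++ Y ++ Z₂

/-- `→*_R`: the reflexive-transitive closure of one-step reduction. -/
def Steps {α : Type*} (R : Set (List α × List α)) : List α → List α → Prop :=
  Relation.ReflTransGen (Step R)

/-- Noetherian: no infinite reduction sequence. -/
def Noetherian {α : Type*} (R : Set (List α × List α)) : Prop :=
  ¬ ∃ g : ℕ → List α, ∀ i, Step R (g i) (g (i + 1))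

/-- Confluence. -/
def Confluent {α : Type*} (R : Set (List α × List α)) : Prop :=
  ∀ U V W, Steps R U V → Steps R U W → ∃ X, Steps R V X ∧ Steps R W X

/-- Complete rewriting system: Noetherian and confluent. -/
def CompleteRWS {α : Type*} (R : Set (List α × List α)) : Prop :=
  Noetherian R ∧ Confluent R

/-- `Irr R W`: `W ∈ A⁺` has no factor which is the left-hand side of a rule. -/
def Irr {α : Type*} (R : Set (List α × List α)) (W : List α) : Prop :=
  W ≠ [] ∧ ¬ ∃ Z₁ X Z₂, (∃ Y, (X, Y) ∈ R) ∧ W = Z₁ ++ X ++ Z₂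

/-- `Presents R f`: the map sending a nonempty word `u` over `α` to `f u` exhibits the
semigroup `S` as the semigroup presented by `[α; R]`, i.e. the semigroup `A⁺/↔*_R`:
`f` restricted to nonempty words is a surjective semigroup homomorphism whose kernel
is the congruence `↔*_R` generated by `R` (the value of `f` on the empty word is irrelevant). -/
def Presents {α S : Type*} [Semigroup S] (R : Set (List α × List α)) (f : List α → S) : Prop :=
  (∀ u v : List α, u ≠ [] → v ≠ [] → f (u ++ v) = f u * f v) ∧
  (∀ x : S, ∃ u : List α, u ≠ [] ∧ f u = x) ∧
  (∀ u v : List α, u ≠ [] → v ≠ [] → (f u = f v ↔ Relation.EqvGen (Step R) u v))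

/-- `S` has a finite complete rewriting system. -/
def HasFCRS (S : Type*) [Semigroup S] : Prop :=
  ∃ (α : Type) (R : Set (List α × List α)) (f : List α → S),
    Finite α ∧ R.Finite ∧ IsRWS R ∧ CompleteRWS R ∧ Presents R f

/-! ### The construction of Section 5.
`S` is a semigroup, `T` a large subsemigroup, `[A; R]` a finitely presented semigroup
presentation for `S` with `R` complete satisfying (Q1)–(Q3), where
`S \ T = {[s₁]_R, …, [sₙ]_R}` with the `sᵢ ∈ Irr(R) ∩ A` given by `s : Fin n → α`.
The new alphabet `B = A₁ ∪ C` is modelled inside `α ⊕ List α`: `Sum.inl a` is a letter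
`a ∈ A₁` and `Sum.inr u` is the letter `c_u ∈ C`. -/

namespace Sec5

variable {α S : Type*} [Semigroup S]

/-- `A₁ = {a ∈ A : [a]_R ∈ T}`. -/
def A1 (f : List α → S) (T : Subsemigroup S) : Set α := {a | f [a] ∈ T}

/-- `A(T)(0)`: the words `W ∈ A⁺` with `[W]_R ∈ T` such that every factor `X₁` of `W`
with `[X₁]_R ∈ S \ T` satisfies `‖X₁‖ = 1` and `X₁ ∈ A_S = {s₁, …, sₙ}`. -/
def AT0 {n : ℕ} (f : List α → S) (T : Subsemigroup S) (s : Fin n → α) : Set (List α) :=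
  {W | W ≠ [] ∧ f W ∈ T ∧
    ∀ Z₁ X₁ Z₂ : List α, X₁ ≠ [] → W = Z₁ ++ X₁ ++ Z₂ → f X₁ ∉ T → ∃ i, X₁ = [s i]}

/-- `F₁ = A₁` (as one-letter words). -/
def F1 (f : List α → S) (T : Subsemigroup S) : Set (List α) :=
  {W | ∃ a : α, f [a] ∈ T ∧ W = [a]}

/-- `F₂ = {sb : s ∈ A_S, b ∈ A₁ ∪ A_S, [sb]_R ∈ T}`. -/
def F2 {n : ℕ} (f : List α → S) (T : Subsemigroup S) (s : Fin n → α) : Set (List α) :=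
  {W | ∃ (i : Fin n) (b : α), (f [b] ∈ T ∨ ∃ j, b = s j) ∧ f [s i, b] ∈ T ∧ W = [s i, b]}

/-- `F₃ = {as : a ∈ A₁, s ∈ A_S, [as]_R ∈ T}`. -/
def F3 {n : ℕ} (f : List α → S) (T : Subsemigroup S) (s : Fin n → α) : Set (List α) :=
  {W | ∃ (a : α) (i : Fin n), f [a] ∈ T ∧ f [a, s i] ∈ T ∧ W = [a, s i]}

/-- `F₄ = {sbs' : s, s' ∈ A_S, b ∈ A₁ ∪ A_S, [sb]_R, [bs']_R, [sbs']_R ∈ T}`. -/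
def F4 {n : ℕ} (f : List α → S) (T : Subsemigroup S) (s : Fin n → α) : Set (List α) :=
  {W | ∃ (i : Fin n) (b : α) (j : Fin n), (f [b] ∈ T ∨ ∃ k, b = s k) ∧
    f [s i, b] ∈ T ∧ f [b, s j] ∈ T ∧ f [s i, b, s j] ∈ T ∧ W = [s i, b, s j]}

/-- The sets `A(T)(i)` for `i ≥ 1` (with `A(T)(0)` given by `AT0`; the value at `0`
here is the empty set and is unused): `A(T)(1) = F₁ ∪ F₂ ∪ F₃ ∪ F₄` and
`A(T)(i+1) = (⋃_{a ∈ A₁} (a·A(T)(i) ∩ A(T)(0))) ∪ (⋃_{X ∈ F₂} (X·A(T)(i) ∩ A(T)(0)))`. -/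
def ATn {n : ℕ} (f : List α → S) (T : Subsemigroup S) (s : Fin n → α) : ℕ → Set (List α)
  | 0 => ∅
  | 1 => F1 f T ∪ F2 f T s ∪ F3 f T s ∪ F4 f T s
  | (i + 2) =>
      (⋃ a ∈ A1 f T, ({W | ∃ V ∈ ATn f T s (i + 1), W = a :: V} ∩ AT0 f T s)) ∪
      (⋃ X ∈ F2 f T s, ({W | ∃ V ∈ ATn f T s (i + 1), W = X ++ V} ∩ AT0 f T s))

/-- `A(T) = ⋃_{i ≥ 1} A(T)(i)`. -/
def ATset {n : ℕ} (f : List α → S) (T : Subsemigroup S) (s : Fin n → α) : Set (List α) :=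
  ⋃ i : ℕ, ATn f T s (i + 1)

/-- `A₁` viewed as a set of letters of `B`. -/
def A1' (f : List α → S) (T : Subsemigroup S) : Set (α ⊕ List α) :=
  {x | ∃ a : α, f [a] ∈ T ∧ x = Sum.inl a}

/-- `C_R = {c_{as} : [as]_R ∈ T, a ∈ A₁, s ∈ A_S}`. -/
def CR {n : ℕ} (f : List α → S) (T : Subsemigroup S) (s : Fin n → α) : Set (α ⊕ List α) :=
  {x | ∃ (a : α) (i : Fin n), f [a] ∈ T ∧ f [a, s i] ∈ T ∧ x = Sum.inr [a, s i]}

/-- `C_{L₁} = {c_{sa} : [sa]_R ∈ T, a ∈ A₁, s ∈ A_S}`. -/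
def CL1 {n : ℕ} (f : List α → S) (T : Subsemigroup S) (s : Fin n → α) : Set (α ⊕ List α) :=
  {x | ∃ (i : Fin n) (a : α), f [a] ∈ T ∧ f [s i, a] ∈ T ∧ x = Sum.inr [s i, a]}

/-- `C_{L₂} = {c_{ss'} : [ss']_R ∈ T, s, s' ∈ A_S}`. -/
def CL2 {n : ℕ} (f : List α → S) (T : Subsemigroup S) (s : Fin n → α) : Set (α ⊕ List α) :=
  {x | ∃ i j : Fin n, f [s i, s j] ∈ T ∧ x = Sum.inr [s i, s j]}

/-- `C_{M₁} = {c_{s'as} : [s'as]_R, [s'a]_R, [as]_R ∈ T, a ∈ A₁, s, s' ∈ A_S}`. -/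
def CM1 {n : ℕ} (f : List α → S) (T : Subsemigroup S) (s : Fin n → α) : Set (α ⊕ List α) :=
  {x | ∃ (i : Fin n) (a : α) (j : Fin n), f [a] ∈ T ∧
    f [s i, a, s j] ∈ T ∧ f [s i, a] ∈ T ∧ f [a, s j] ∈ T ∧ x = Sum.inr [s i, a, s j]}

/-- `C_{M₂} = {c_{ss's''} : [ss's'']_R, [ss']_R, [s's'']_R ∈ T, s, s', s'' ∈ A_S}`. -/
def CM2 {n : ℕ} (f : List α → S) (T : Subsemigroup S) (s : Fin n → α) : Set (α ⊕ List α) :=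
  {x | ∃ i j k : Fin n, f [s i, s j, s k] ∈ T ∧ f [s i, s j] ∈ T ∧ f [s j, s k] ∈ T ∧
    x = Sum.inr [s i, s j, s k]}

/-- The alphabet `B = A₁ ∪ C`, `C = C_R ∪ C_{L₁} ∪ C_{L₂} ∪ C_{M₁} ∪ C_{M₂}`,
as a set of letters of `α ⊕ List α`. -/
def BSet {n : ℕ} (f : List α → S) (T : Subsemigroup S) (s : Fin n → α) : Set (α ⊕ List α) :=
  A1' f T ∪ CR f T s ∪ CL1 f T s ∪ CL2 f T s ∪ CM1 f T s ∪ CM2 f T s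

/-- The homomorphism `φ : B⁺ → A⁺`, `φ(a) = a` for `a ∈ A₁` and `φ(c_u) = u`. -/
def phiT {α : Type*} (l : List (α ⊕ List α)) : List α :=
  l.flatMap (Sum.elim (fun a => [a]) id)

open scoped Classical in
/-- The function `ρ : A(T) → B⁺` of Section 5 (extended arbitrarily off `A(T)`):
on `A(T)(1)`, `ρ(W) = W` for `W ∈ F₁` and `ρ(W) = c_W` for `W ∈ F₂ ∪ F₃ ∪ F₄`;
for `W = aW₁ ∈ A(T)(i+1)` with `a ∈ A₁`, `ρ(W) = aρ(W₁)`; and for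
`W = sbW₁ ∈ A(T)(i+1)` with `sb ∈ F₂`, `ρ(W) = c_{sb}ρ(W₁)`. -/
noncomputable def rhoT {n : ℕ} (s : Fin n → α) : List α → List (α ⊕ List α)
  | [] => []
  | [a] => [Sum.inl a]
  | [a, b] =>
      if (∃ i, a = s i) ∨ (∃ i, b = s i) then [Sum.inr [a, b]]
      else [Sum.inl a, Sum.inl b]
  | [a, b, c] =>
      if ∃ i, a = s i then
        if ∃ i, c = s i then [Sum.inr [a, b, c]]
        else Sum.inr [a, b] :: rhoT s [c]
      else Sum.inl a :: rhoT s [b, c]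
  | a :: b :: d :: e :: rest =>
      if ∃ i, a = s i then Sum.inr [a, b] :: rhoT s (d :: e :: rest)
      else Sum.inl a :: rhoT s (b :: d :: e :: rest)

/-- `N = (max_{X ∈ Left(R)} ‖X‖) + 4`. -/
noncomputable def Nbound (R : Set (List α × List α)) : ℕ :=
  sSup {m | ∃ X Y : List α, (X, Y) ∈ R ∧ m = X.length} + 4

/-- Rules of the form (D1): `U' → ρ(Ū)` for `U' ∈ B⁺` with `‖φ(U')‖ ≤ N` and
`φ(U') ∉ Irr(R)`, where `φ(U') →*_R Ū ∈ Irr(R)`. -/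
def D1 {n : ℕ} (R : Set (List α × List α)) (f : List α → S) (T : Subsemigroup S)
    (s : Fin n → α) : Set (List (α ⊕ List α) × List (α ⊕ List α)) :=
  {p | ∃ (U' : List (α ⊕ List α)) (Ubar : List α), U' ≠ [] ∧
    (∀ x ∈ U', x ∈ BSet f T s) ∧ (phiT U').length ≤ Nbound R ∧ ¬ Irr R (phiT U') ∧
    Steps R (phiT U') Ubar ∧ Irr R Ubar ∧ p = (U', rhoT s Ubar)}

/-- Rules of the form (D2): `U' → ρ(φ(U'))` for `U' ∈ B⁺` with `‖U'‖ = 2`,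
`φ(U') ∈ A(T)` and `U' ≠ ρ(φ(U'))`. -/
def D2 {n : ℕ} (f : List α → S) (T : Subsemigroup S) (s : Fin n → α) :
    Set (List (α ⊕ List α) × List (α ⊕ List α)) :=
  {p | ∃ U' : List (α ⊕ List α), (∀ x ∈ U', x ∈ BSet f T s) ∧ U'.length = 2 ∧
    phiT U' ∈ ATset f T s ∧ U' ≠ rhoT s (phiT U') ∧ p = (U', rhoT s (phiT U'))}

/-- The rewriting system `R_T` over `B`. -/
def RT {n : ℕ} (R : Set (List α × List α)) (f : List α → S) (T : Subsemigroup S)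
    (s : Fin n → α) : Set (List (α ⊕ List α) × List (α ⊕ List α)) :=
  D1 R f T s ∪ D2 f T s

end Sec5

open Sec5

section Aux

open Sec5

variable {α S : Type*} [Semigroup S] {n : ℕ}

lemma rhoT_one (s : Fin n → α) (a : α) : rhoT s [a] = [Sum.inl a] := by
  simp [rhoT]

lemma rhoT_cons_inl (s : Fin n → α) (a : α) (V : List α)
    (ha : ¬ ∃ i, a = s i) (hV : V ≠ [])
    (hV1 : ∀ b, V = [b] → ¬ ∃ i, b = s i) :
    rhoT s (a :: V) = Sum.inl a :: rhoT s V := by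
  match V with
  | [] => exact absurd rfl hV
  | [b] =>
    conv_lhs => rw [show (a :: [b]) = [a, b] from rfl, rhoT]
    rw [if_neg (fun h => h.elim ha (hV1 b rfl)), rhoT_one]
  | [b, c] =>
    conv_lhs => rw [show (a :: [b, c]) = [a, b, c] from rfl, rhoT]
    rw [if_neg ha]
  | b :: c :: d :: rest =>
    conv_lhs => rw [rhoT]
    rw [if_neg ha]

lemma rhoT_cons_inr (s : Fin n → α) (i : Fin n) (b : α) (V : List α)
    (hV : V ≠ []) (hV1 : ∀ c, V = [c] → ¬ ∃ k, c = s k) :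
    rhoT s (s i :: b :: V) = Sum.inr [s i, b] :: rhoT s V := by
  match V with
  | [] => exact absurd rfl hV
  | [c] =>
    conv_lhs => rw [show (s i :: b :: [c]) = [s i, b, c] from rfl, rhoT]
    rw [if_pos (⟨i, rfl⟩ : ∃ k, s i = s k), if_neg (hV1 c rfl), rhoT_one]
  | c :: d :: rest =>
    conv_lhs => rw [rhoT]
    rw [if_pos (⟨i, rfl⟩ : ∃ k, s i = s k)]

lemma ATn_shape (f : List α → S) (T : Subsemigroup S) (s : Fin n → α) :
    ∀ l U, U ∈ ATn f T s (l + 1) → U ≠ [] ∧ ∀ c, U = [c] → f [c] ∈ T := by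
  intro l
  induction l with
  | zero =>
    rintro U (((⟨a, ha, rfl⟩ | ⟨i, b, hb, hsb, rfl⟩) | ⟨a, i, ha, hai, rfl⟩) |
      ⟨i, b, j, hb, h1, h2, h3, rfl⟩)
    · exact ⟨by simp, fun c hc => by injection hc with h1 h2; subst h1; exact ha⟩
    · exact ⟨by simp, fun c hc => by simp at hc⟩
    · exact ⟨by simp, fun c hc => by simp at hc⟩
    · exact ⟨by simp, fun c hc => by simp at hc⟩
  | succ m ih =>
    intro U hU
    simp only [ATn, Set.mem_union, Set.mem_iUnion, Set.mem_inter_iff, Set.mem_setOf_eq] at hU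
    rcases hU with ⟨a, ha, ⟨V, hV, rfl⟩, hU0⟩ | ⟨X, hX, ⟨V, hV, rfl⟩, hU0⟩
    · refine ⟨by simp, fun c hc => ?_⟩
      injection hc with h1 h2
      exact absurd h2 (ih V hV).1
    · obtain ⟨i, b, hb, hsb, rfl⟩ := hX
      refine ⟨by simp, fun c hc => ?_⟩
      have := congrArg List.length hc
      simp at this

end Aux

/-- **Lemma 5.5.** If `U ∈ A(T)(l)` with `l ≥ 1`, then `ρ(U) = b'₁⋯b'_l` with each
`b'ᵢ ∈ B`; moreover if `l > 1` then `b'ᵢ ∈ A₁ ∪ C_{L₁} ∪ C_{L₂}` for `1 ≤ i ≤ l − 1`. -/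
theorem lemma_5_5
    {α S : Type*} [Semigroup S] (R : Set (List α × List α))
    (hαfin : Finite α) (hRfin : R.Finite) (hRWS : IsRWS R) (hcomp : CompleteRWS R)
    (f : List α → S) (hpres : Presents R f)
    (T : Subsemigroup S) {n : ℕ} (s : Fin n → α)
    -- (Q1): `S \ T = {[s₁]_R, …, [sₙ]_R}` with `s₁, …, sₙ ∈ Irr(R) ∩ A`
    (hQ1irr : ∀ i : Fin n, Irr R [s i])
    (hQ1 : (T : Set S)ᶜ = {x | ∃ i : Fin n, x = f [s i]})
    -- (Q2): right-hand sides of rules are irreducible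
    (hQ2 : ∀ X Y : List α, (X, Y) ∈ R → Irr R Y)
    -- (Q3): no left-hand side is reducible by another rule
    (hQ3 : ∀ X Y : List α, (X, Y) ∈ R → ¬ ∃ X' : List α, Step (R \ {(X, Y)}) X X')
    (l : ℕ) (hl : 1 ≤ l) (U : List α) (hU : U ∈ ATn f T s l) :
    (rhoT s U).length = l ∧ (∀ x ∈ rhoT s U, x ∈ BSet f T s) ∧
    (∀ x ∈ (rhoT s U).dropLast, x ∈ A1' f T ∪ CL1 f T s ∪ CL2 f T s) := by
  have hsT : ∀ i : Fin n, f [s i] ∉ T := by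
    intro i hi
    have h : f [s i] ∈ (T : Set S)ᶜ := by rw [hQ1]; exact ⟨i, rfl⟩
    exact h hi
  have hns : ∀ a : α, f [a] ∈ T → ¬ ∃ i, a = s i := by
    rintro a ha ⟨i, rfl⟩; exact hsT i ha
  clear hl
  induction l generalizing U with
  | zero => simp [ATn] at hU
  | succ k ih =>
    match k, hU with
    | 0, hU =>
      rcases hU with (((⟨a, ha, rfl⟩ | ⟨i, b, hb, hsb, rfl⟩) | ⟨a, i, ha, hai, rfl⟩) |
        ⟨i, b, j, hb, h1, h2, h3, rfl⟩)
      · refine ⟨by simp [rhoT_one], ?_, by simp [rhoT_one]⟩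
        intro x hx
        simp only [rhoT_one, List.mem_singleton] at hx
        subst hx
        simp only [BSet, Set.mem_union]
        exact Or.inl (Or.inl (Or.inl (Or.inl (Or.inl ⟨a, ha, rfl⟩))))
      · rw [show ([s i, b] : List α) = [s i, b] from rfl]
        rw [rhoT, if_pos (Or.inl ⟨i, rfl⟩)]
        refine ⟨rfl, ?_, by simp⟩
        intro x hx
        simp only [List.mem_singleton] at hx
        subst hx
        simp only [BSet, Set.mem_union]
        rcases hb with hb | ⟨j, rfl⟩
        · exact Or.inl (Or.inl (Or.inl (Or.inr ⟨i, b, hb, hsb, rfl⟩)))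
        · exact Or.inl (Or.inl (Or.inr ⟨i, j, hsb, rfl⟩))
      · rw [rhoT, if_pos (Or.inr ⟨i, rfl⟩)]
        refine ⟨rfl, ?_, by simp⟩
        intro x hx
        simp only [List.mem_singleton] at hx
        subst hx
        simp only [BSet, Set.mem_union]
        exact Or.inl (Or.inl (Or.inl (Or.inl (Or.inr ⟨a, i, ha, hai, rfl⟩))))
      · rw [rhoT, if_pos ⟨i, rfl⟩, if_pos ⟨j, rfl⟩]
        refine ⟨rfl, ?_, by simp⟩
        intro x hx
        simp only [List.mem_singleton] at hx
        subst hx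
        simp only [BSet, Set.mem_union]
        rcases hb with hb | ⟨k, rfl⟩
        · exact Or.inl (Or.inr ⟨i, b, j, hb, h3, h1, h2, rfl⟩)
        · exact Or.inr ⟨i, k, j, h3, h1, h2, rfl⟩
    | (m + 1), hU =>
      simp only [ATn, Set.mem_union, Set.mem_iUnion, Set.mem_inter_iff,
        Set.mem_setOf_eq] at hU
      rcases hU with ⟨a, ha, ⟨V, hV, rfl⟩, hU0⟩ | ⟨X, hX, ⟨V, hV, rfl⟩, hU0⟩
      · have ha' : f [a] ∈ T := ha
        have hshape := ATn_shape f T s m V hV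
        have hVs : ∀ b, V = [b] → ¬ ∃ i, b = s i := fun b hb => hns b (hshape.2 b hb)
        rw [rhoT_cons_inl s a V (hns a ha') hshape.1 hVs]
        obtain ⟨hlen, hB, hdrop⟩ := ih V hV
        obtain ⟨y, W, hyW⟩ := List.exists_cons_of_ne_nil
          (show rhoT s V ≠ [] by intro h; rw [h] at hlen; simp at hlen)
        refine ⟨by simp [hlen], ?_, ?_⟩
        · intro x hx
          rcases List.mem_cons.mp hx with rfl | hx
          · simp only [BSet, Set.mem_union]
            exact Or.inl (Or.inl (Or.inl (Or.inl (Or.inl ⟨a, ha', rfl⟩))))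
          · exact hB x hx
        · rw [hyW, List.dropLast_cons₂]
          intro x hx
          rcases List.mem_cons.mp hx with rfl | hx
          · exact Or.inl (Or.inl ⟨a, ha', rfl⟩)
          · rw [hyW] at hdrop
            exact hdrop x hx
      · obtain ⟨i, b, hb, hsb, rfl⟩ := hX
        have hshape := ATn_shape f T s m V hV
        have hVs : ∀ c, V = [c] → ¬ ∃ k, c = s k := fun c hc => hns c (hshape.2 c hc)
        rw [show ([s i, b] ++ V : List α) = s i :: b :: V from rfl,
          rhoT_cons_inr s i b V hshape.1 hVs]
        obtain ⟨hlen, hB, hdrop⟩ := ih V hV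
        obtain ⟨y, W, hyW⟩ := List.exists_cons_of_ne_nil
          (show rhoT s V ≠ [] by intro h; rw [h] at hlen; simp at hlen)
        have hhead : Sum.inr [s i, b] ∈ CL1 f T s ∪ CL2 f T s := by
          rcases hb with hb | ⟨j, rfl⟩
          · exact Or.inl ⟨i, b, hb, hsb, rfl⟩
          · exact Or.inr ⟨i, j, hsb, rfl⟩
        refine ⟨by simp [hlen], ?_, ?_⟩
        · intro x hx
          rcases List.mem_cons.mp hx with rfl | hx
          · simp only [BSet, Set.mem_union]
            rcases hhead with h | h
            · exact Or.inl (Or.inl (Or.inl (Or.inr h)))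
            · exact Or.inl (Or.inl (Or.inr h))
          · exact hB x hx
        · rw [hyW, List.dropLast_cons₂]
          intro x hx
          rcases List.mem_cons.mp hx with rfl | hx
          · rcases hhead with h | h
            · exact Or.inl (Or.inr h)
            · exact Or.inr h
          · rw [hyW] at hdrop
            exact hdrop x hx
end

section
/- Let U' = b'₁⋯b'_l ∈ B⁺ where b'ᵢ ∈ A₁ ∪ C_{L₁} ∪ C_{L₂} for all 1 ≤ i ≤ l − 1 and b'_l ∈ B. If φ(U') ∈ A(T), then φ(U') ∈ A(T)(l) and ρ(φ(U')) = U'. -/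
open Sec5

/-! Induct on `U'`. Each letter of `U'` before the last contributes to `φ(U')` either a
letter `a ∈ A₁` or a block `sb ∈ F₂`, which is exactly the prefix that the recursions
defining `A(T)(i+1)` and `ρ` strip off. The image under `φ` of a nonempty word over `B` is
neither empty nor a single letter of `A_S` (as `[s]_R ∉ T` by (Q1)), so `φ(U')` cannot lie
in `A(T)(1)` nor be decomposed with a different first block: stripping the first letter of
`U'` strips the first block of `φ(U')` in both recursions. -/

namespace Sec5

variable {α S : Type*} [Semigroup S] {f : List α → S} {T : Subsemigroup S} {n : ℕ}
  {s : Fin n → α}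

theorem f_singleton_s_notMem (hQ1 : (T : Set S)ᶜ = {x | ∃ i : Fin n, x = f [s i]})
    (i : Fin n) : f [s i] ∉ T :=
  show f [s i] ∈ (T : Set S)ᶜ from hQ1 ▸ ⟨i, rfl⟩

theorem ne_s_of_mem (hQ1 : (T : Set S)ᶜ = {x | ∃ i : Fin n, x = f [s i]}) {a : α}
    (ha : f [a] ∈ T) (i : Fin n) : a ≠ s i := by
  rintro rfl
  exact f_singleton_s_notMem hQ1 i ha

theorem phiT_singleton_inl (a : α) : phiT [(Sum.inl a : α ⊕ List α)] = [a] := by simp [phiT]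

theorem phiT_singleton_inr (u : List α) : phiT [(Sum.inr u : α ⊕ List α)] = u := by simp [phiT]

theorem phiT_cons (x : α ⊕ List α) (W : List (α ⊕ List α)) :
    phiT (x :: W) = phiT [x] ++ phiT W := by simp [phiT]

theorem eq_inl_or_eq_inr_of_mem_BSet {x : α ⊕ List α} (hx : x ∈ BSet f T s) :
    (∃ a, f [a] ∈ T ∧ x = Sum.inl a) ∨ ∃ u : List α, 2 ≤ u.length ∧ x = Sum.inr u := by
  simp only [BSet, Set.mem_union] at hx
  rcases hx with ((((h | ⟨_, _, -, -, rfl⟩) | ⟨_, _, -, -, rfl⟩) | ⟨_, _, -, rfl⟩) |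
    ⟨_, _, _, -, -, -, -, rfl⟩) | ⟨_, _, _, -, -, -, rfl⟩
  · exact Or.inl h
  all_goals exact Or.inr ⟨_, by simp, rfl⟩

theorem eq_inl_or_eq_inr_of_mem_A1'_CL {x : α ⊕ List α}
    (hx : x ∈ A1' f T ∪ CL1 f T s ∪ CL2 f T s) :
    (∃ a, f [a] ∈ T ∧ x = Sum.inl a) ∨
      ∃ i b, (f [b] ∈ T ∨ ∃ j, b = s j) ∧ f [s i, b] ∈ T ∧ x = Sum.inr [s i, b] := by
  rcases hx with (h | ⟨i, a, ha, hia, rfl⟩) | ⟨i, j, hij, rfl⟩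
  · exact Or.inl h
  · exact Or.inr ⟨i, a, Or.inl ha, hia, rfl⟩
  · exact Or.inr ⟨i, s j, Or.inr ⟨j, rfl⟩, hij, rfl⟩

theorem phiT_ne_nil_and_ne_s (hQ1 : (T : Set S)ᶜ = {x | ∃ i : Fin n, x = f [s i]})
    {W : List (α ⊕ List α)} (hW : W ≠ []) (hB : ∀ x ∈ W, x ∈ BSet f T s) :
    phiT W ≠ [] ∧ ∀ i, phiT W ≠ [s i] := by
  obtain ⟨x, W, rfl⟩ := List.exists_cons_of_ne_nil hW
  rw [phiT_cons]
  rcases eq_inl_or_eq_inr_of_mem_BSet (hB x List.mem_cons_self) with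
    ⟨a, ha, rfl⟩ | ⟨u, hu, rfl⟩
  · refine ⟨by simp [phiT_singleton_inl], fun i h => ?_⟩
    rw [phiT_singleton_inl, List.singleton_append, List.cons.injEq] at h
    exact ne_s_of_mem hQ1 ha i h.1
  · rw [phiT_singleton_inr]
    refine ⟨fun h => ?_, fun i h => ?_⟩ <;>
    · have := congrArg List.length h
      simp only [List.length_append, List.length_cons, List.length_nil] at this
      omega

theorem phiT_singleton_mem_ATn_one {x : α ⊕ List α} (hx : x ∈ BSet f T s) :
    phiT [x] ∈ ATn f T s 1 := by
  simp only [BSet, Set.mem_union] at hx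
  simp only [ATn, Set.mem_union]
  rcases hx with ((((⟨a, ha, rfl⟩ | ⟨a, i, ha, hai, rfl⟩) | ⟨i, a, ha, hia, rfl⟩) |
    ⟨i, j, hij, rfl⟩) | ⟨i, a, j, ha, hiaj, hia, haj, rfl⟩) | ⟨i, j, k, hijk, hij, hjk, rfl⟩
  · exact Or.inl (Or.inl (Or.inl ⟨a, ha, phiT_singleton_inl a⟩))
  · exact Or.inl (Or.inr ⟨a, i, ha, hai, phiT_singleton_inr _⟩)
  · exact Or.inl (Or.inl (Or.inr ⟨i, a, Or.inl ha, hia, phiT_singleton_inr _⟩))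
  · exact Or.inl (Or.inl (Or.inr ⟨i, s j, Or.inr ⟨j, rfl⟩, hij, phiT_singleton_inr _⟩))
  · exact Or.inr ⟨i, a, j, Or.inl ha, hia, haj, hiaj, phiT_singleton_inr _⟩
  · exact Or.inr ⟨i, s j, k, Or.inr ⟨j, rfl⟩, hij, hjk, hijk, phiT_singleton_inr _⟩

theorem rhoT_phiT_singleton {x : α ⊕ List α} (hx : x ∈ BSet f T s) :
    rhoT s (phiT [x]) = [x] := by
  simp only [BSet, Set.mem_union] at hx
  rcases hx with ((((⟨a, -, rfl⟩ | ⟨a, i, -, -, rfl⟩) | ⟨i, a, -, -, rfl⟩) |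
    ⟨i, j, -, rfl⟩) | ⟨i, a, j, -, -, -, -, rfl⟩) | ⟨i, j, k, -, -, -, rfl⟩
  · rw [phiT_singleton_inl, rhoT]
  · rw [phiT_singleton_inr, rhoT, if_pos (Or.inr ⟨i, rfl⟩)]
  · rw [phiT_singleton_inr, rhoT, if_pos (Or.inl ⟨i, rfl⟩)]
  · rw [phiT_singleton_inr, rhoT, if_pos (Or.inl ⟨i, rfl⟩)]
  · rw [phiT_singleton_inr, rhoT, if_pos ⟨i, rfl⟩, if_pos ⟨j, rfl⟩]
  · rw [phiT_singleton_inr, rhoT, if_pos ⟨i, rfl⟩, if_pos ⟨k, rfl⟩]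

theorem mem_ATn_succ_succ_iff {k : ℕ} {W : List α} :
    W ∈ ATn f T s (k + 2) ↔ W ∈ AT0 f T s ∧
      ((∃ a ∈ A1 f T, ∃ V ∈ ATn f T s (k + 1), W = a :: V) ∨
        ∃ X ∈ F2 f T s, ∃ V ∈ ATn f T s (k + 1), W = X ++ V) := by
  simp only [ATn, Set.mem_union, Set.mem_iUnion, Set.mem_inter_iff, Set.mem_ofPred_eq,
    exists_prop]
  aesop

theorem tail_mem_ATn_of_cons_mem_ATn_succ
    (hQ1 : (T : Set S)ᶜ = {x | ∃ i : Fin n, x = f [s i]}) {a : α} {V : List α} {k : ℕ}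
    (ha : f [a] ∈ T) (hV : V ≠ []) (hVs : ∀ i, V ≠ [s i])
    (h : a :: V ∈ ATn f T s (k + 1)) : V ∈ ATn f T s k ∧ a :: V ∈ AT0 f T s := by
  cases k with
  | zero =>
    exfalso
    simp only [ATn, Set.mem_union] at h
    rcases h with ((⟨_, -, h⟩ | ⟨i, _, -, -, h⟩) | ⟨_, i, -, -, h⟩) | ⟨i, _, _, -, -, -, -, h⟩
    · exact hV (List.cons.inj h).2
    · exact ne_s_of_mem hQ1 ha i (List.cons.inj h).1
    · exact hVs i (List.cons.inj h).2
    · exact ne_s_of_mem hQ1 ha i (List.cons.inj h).1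
  | succ k =>
    obtain ⟨h0, ⟨_, -, V', hV', h⟩ | ⟨_, ⟨i, _, -, -, rfl⟩, _, -, h⟩⟩ :=
      mem_ATn_succ_succ_iff.1 h
    · obtain ⟨-, rfl⟩ := List.cons.inj h
      exact ⟨hV', h0⟩
    · exact absurd (List.cons.inj h).1 (ne_s_of_mem hQ1 ha i)

theorem tail_mem_ATn_of_s_cons_cons_mem_ATn_succ
    (hQ1 : (T : Set S)ᶜ = {x | ∃ i : Fin n, x = f [s i]}) {i : Fin n} {b : α} {V : List α}
    {k : ℕ} (hV : V ≠ []) (hVs : ∀ i, V ≠ [s i]) (h : s i :: b :: V ∈ ATn f T s (k + 1)) :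
    V ∈ ATn f T s k ∧ s i :: b :: V ∈ AT0 f T s := by
  cases k with
  | zero =>
    exfalso
    simp only [ATn, Set.mem_union] at h
    rcases h with ((⟨_, -, h⟩ | ⟨_, _, -, -, h⟩) | ⟨_, _, ha, -, h⟩) | ⟨_, _, j, -, -, -, -, h⟩
    · exact List.cons_ne_nil _ _ (List.cons.inj h).2
    · exact hV (List.cons.inj (List.cons.inj h).2).2
    · exact ne_s_of_mem hQ1 ha i (List.cons.inj h).1.symm
    · exact hVs j (List.cons.inj (List.cons.inj h).2).2
  | succ k =>
    obtain ⟨h0, ⟨_, ha, _, -, h⟩ | ⟨_, ⟨_, _, -, -, rfl⟩, V', hV', h⟩⟩ :=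
      mem_ATn_succ_succ_iff.1 h
    · exact absurd (List.cons.inj h).1.symm (ne_s_of_mem hQ1 ha i)
    · obtain ⟨-, -, rfl⟩ : _ ∧ _ ∧ V = V' := by simpa using h
      exact ⟨hV', h0⟩

theorem tail_mem_ATset (hQ1 : (T : Set S)ᶜ = {x | ∃ i : Fin n, x = f [s i]})
    {x : α ⊕ List α} (hx : x ∈ A1' f T ∪ CL1 f T s ∪ CL2 f T s) {V : List α} (hV : V ≠ [])
    (hVs : ∀ i, V ≠ [s i]) (h : phiT [x] ++ V ∈ ATset f T s) :
    V ∈ ATset f T s ∧ phiT [x] ++ V ∈ AT0 f T s := by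
  obtain ⟨k, hk⟩ := Set.mem_iUnion.1 h
  have key : V ∈ ATn f T s k ∧ phiT [x] ++ V ∈ AT0 f T s := by
    rcases eq_inl_or_eq_inr_of_mem_A1'_CL hx with ⟨a, ha, rfl⟩ | ⟨i, b, -, -, rfl⟩
    · rw [phiT_singleton_inl] at hk ⊢
      exact tail_mem_ATn_of_cons_mem_ATn_succ hQ1 ha hV hVs hk
    · rw [phiT_singleton_inr] at hk ⊢
      exact tail_mem_ATn_of_s_cons_cons_mem_ATn_succ hQ1 hV hVs hk
  cases k with
  | zero => simp [ATn] at key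
  | succ k => exact ⟨Set.mem_iUnion.2 ⟨k, key.1⟩, key.2⟩

theorem phiT_singleton_append_mem_ATn_succ_succ {x : α ⊕ List α}
    (hx : x ∈ A1' f T ∪ CL1 f T s ∪ CL2 f T s) {V : List α} {m : ℕ}
    (hV : V ∈ ATn f T s (m + 1)) (h0 : phiT [x] ++ V ∈ AT0 f T s) :
    phiT [x] ++ V ∈ ATn f T s (m + 2) := by
  refine mem_ATn_succ_succ_iff.2 ⟨h0, ?_⟩
  rcases eq_inl_or_eq_inr_of_mem_A1'_CL hx with ⟨a, ha, rfl⟩ | ⟨i, b, hb, hib, rfl⟩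
  · rw [phiT_singleton_inl]
    exact Or.inl ⟨a, ha, V, hV, rfl⟩
  · rw [phiT_singleton_inr]
    exact Or.inr ⟨_, ⟨i, b, hb, hib, rfl⟩, V, hV, rfl⟩

theorem rhoT_cons_of_ne_s {a : α} (ha : ∀ i, a ≠ s i) {V : List α} (hV : V ≠ [])
    (hVs : ∀ i, V ≠ [s i]) : rhoT s (a :: V) = Sum.inl a :: rhoT s V := by
  match V, hV, hVs with
  | [c], _, hVs =>
    simp only [rhoT]
    rw [if_neg]
    rintro (⟨i, h⟩ | ⟨i, rfl⟩)
    exacts [ha i h, hVs i rfl]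
  | [_, _], _, _ =>
    simp only [rhoT]
    rw [if_neg (not_exists.2 ha)]
  | _ :: _ :: _ :: _, _, _ =>
    simp only [rhoT]
    rw [if_neg (not_exists.2 ha)]

theorem rhoT_s_cons_cons {i : Fin n} {b : α} {V : List α} (hV : V ≠ [])
    (hVs : ∀ i, V ≠ [s i]) : rhoT s (s i :: b :: V) = Sum.inr [s i, b] :: rhoT s V := by
  match V, hV, hVs with
  | [c], _, hVs =>
    simp only [rhoT]
    rw [if_pos ⟨i, rfl⟩, if_neg]
    rintro ⟨j, rfl⟩
    exact hVs j rfl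
  | _ :: _ :: _, _, _ =>
    simp only [rhoT]
    rw [if_pos ⟨i, rfl⟩]

theorem rhoT_phiT_singleton_append (hQ1 : (T : Set S)ᶜ = {x | ∃ i : Fin n, x = f [s i]})
    {x : α ⊕ List α} (hx : x ∈ A1' f T ∪ CL1 f T s ∪ CL2 f T s) {V : List α} (hV : V ≠ [])
    (hVs : ∀ i, V ≠ [s i]) : rhoT s (phiT [x] ++ V) = x :: rhoT s V := by
  rcases eq_inl_or_eq_inr_of_mem_A1'_CL hx with ⟨a, ha, rfl⟩ | ⟨i, b, -, -, rfl⟩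
  · rw [phiT_singleton_inl]
    exact rhoT_cons_of_ne_s (ne_s_of_mem hQ1 ha) hV hVs
  · rw [phiT_singleton_inr]
    exact rhoT_s_cons_cons hV hVs

end Sec5

theorem lemma_5_7_general
    {α S : Type*} [Semigroup S]
    (f : List α → S)
    (T : Subsemigroup S) {n : ℕ} (s : Fin n → α)
    -- (Q1): `S \ T = {[s₁]_R, …, [sₙ]_R}` with `s₁, …, sₙ ∈ Irr(R) ∩ A`
    (hQ1 : (T : Set S)ᶜ = {x | ∃ i : Fin n, x = f [s i]})
    (U' : List (α ⊕ List α)) (hne : U' ≠ [])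
    (hB : ∀ x ∈ U', x ∈ BSet f T s)
    (hinit : ∀ x ∈ U'.dropLast, x ∈ A1' f T ∪ CL1 f T s ∪ CL2 f T s)
    (hφ : phiT U' ∈ ATset f T s) :
    phiT U' ∈ ATn f T s U'.length ∧ rhoT s (phiT U') = U' := by
  induction U' with
  | nil => exact absurd rfl hne
  | cons x W ih =>
    rcases W with _ | ⟨y, W⟩
    · have hx := hB x List.mem_cons_self
      exact ⟨phiT_singleton_mem_ATn_one hx, rhoT_phiT_singleton hx⟩
    have hBW : ∀ z ∈ y :: W, z ∈ BSet f T s := fun z hz => hB z (List.mem_cons_of_mem x hz)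
    have hinitW : ∀ z ∈ (y :: W).dropLast, z ∈ A1' f T ∪ CL1 f T s ∪ CL2 f T s :=
      fun z hz => hinit z (List.dropLast_cons_cons ▸ List.mem_cons_of_mem x hz)
    have hx : x ∈ A1' f T ∪ CL1 f T s ∪ CL2 f T s := hinit x (by simp)
    obtain ⟨hV, hVs⟩ := phiT_ne_nil_and_ne_s hQ1 (List.cons_ne_nil y W) hBW
    rw [phiT_cons] at hφ ⊢
    obtain ⟨hφW, hAT0⟩ := tail_mem_ATset hQ1 hx hV hVs hφ
    obtain ⟨hmem, hrho⟩ := ih (List.cons_ne_nil y W) hBW hinitW hφW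
    exact ⟨phiT_singleton_append_mem_ATn_succ_succ hx hmem hAT0,
      by rw [rhoT_phiT_singleton_append hQ1 hx hV hVs, hrho]⟩

/-- **Lemma 5.7.** Let `U' = b'₁⋯b'_l ∈ B⁺` with `b'ᵢ ∈ A₁ ∪ C_{L₁} ∪ C_{L₂}` for all
`1 ≤ i ≤ l − 1` and `b'_l ∈ B`. If `φ(U') ∈ A(T)`, then `φ(U') ∈ A(T)(l)` and
`ρ(φ(U')) = U'`. -/
theorem lemma_5_7
    {α S : Type*} [Semigroup S] (R : Set (List α × List α))
    (hαfin : Finite α) (hRfin : R.Finite) (hRWS : IsRWS R) (hcomp : CompleteRWS R)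
    (f : List α → S) (hpres : Presents R f)
    (T : Subsemigroup S) {n : ℕ} (s : Fin n → α)
    -- (Q1): `S \ T = {[s₁]_R, …, [sₙ]_R}` with `s₁, …, sₙ ∈ Irr(R) ∩ A`
    (hQ1irr : ∀ i : Fin n, Irr R [s i])
    (hQ1 : (T : Set S)ᶜ = {x | ∃ i : Fin n, x = f [s i]})
    -- (Q2): right-hand sides of rules are irreducible
    (hQ2 : ∀ X Y : List α, (X, Y) ∈ R → Irr R Y)
    -- (Q3): no left-hand side is reducible by another rule
    (hQ3 : ∀ X Y : List α, (X, Y) ∈ R → ¬ ∃ X' : List α, Step (R \ {(X, Y)}) X X')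
    (U' : List (α ⊕ List α)) (hne : U' ≠ [])
    (hB : ∀ x ∈ U', x ∈ BSet f T s)
    (hinit : ∀ x ∈ U'.dropLast, x ∈ A1' f T ∪ CL1 f T s ∪ CL2 f T s)
    (hφ : phiT U' ∈ ATset f T s) :
    phiT U' ∈ ATn f T s U'.length ∧ rhoT s (phiT U') = U' :=
  lemma_5_7_general f T s hQ1 U' hne hB hinit hφ
end

section
/- For every U' ∈ B⁺ with φ(U') ∈ A(T), one has U' →*_{R_T} ρ(φ(U')). -/
open Sec5
section Aux
variable {α S : Type*} [Semigroup S] {n : ℕ} {R : Set (List α × List α)}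
  {f : List α → S} {T : Subsemigroup S} {s : Fin n → α}

/-! ### phiT basics -/

lemma phiT_nil : phiT ([] : List (α ⊕ List α)) = [] := rfl
lemma phiT_inl (a : α) (l : List (α ⊕ List α)) : phiT (Sum.inl a :: l) = a :: phiT l := rfl
lemma phiT_inr (u : List α) (l : List (α ⊕ List α)) : phiT (Sum.inr u :: l) = u ++ phiT l := rfl
lemma phiT_append (l₁ l₂ : List (α ⊕ List α)) : phiT (l₁ ++ l₂) = phiT l₁ ++ phiT l₂ := by
  simp [phiT]

/-! ### factor lemmas for short lists -/

lemma factor1 {γ : Type*} {p : γ} {Z₁ X₁ Z₂ : List γ}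
    (h : ([p] : List γ) = Z₁ ++ X₁ ++ Z₂) (hne : X₁ ≠ []) : X₁ = [p] := by
  rcases Z₁ with _ | ⟨z, Z₁⟩ <;> rcases X₁ with _ | ⟨x, X₁⟩ <;> simp_all

lemma factor2 {γ : Type*} {p q : γ} {Z₁ X₁ Z₂ : List γ}
    (h : ([p, q] : List γ) = Z₁ ++ X₁ ++ Z₂) (hne : X₁ ≠ []) :
    X₁ = [p] ∨ X₁ = [q] ∨ X₁ = [p, q] := by
  rcases Z₁ with _ | ⟨z, _ | ⟨z', Z₁⟩⟩ <;>
    rcases X₁ with _ | ⟨x, _ | ⟨x', X₁⟩⟩ <;> simp_all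

lemma factor3 {γ : Type*} {p q r : γ} {Z₁ X₁ Z₂ : List γ}
    (h : ([p, q, r] : List γ) = Z₁ ++ X₁ ++ Z₂) (hne : X₁ ≠ []) :
    X₁ = [p] ∨ X₁ = [q] ∨ X₁ = [r] ∨ X₁ = [p, q] ∨ X₁ = [q, r] ∨ X₁ = [p, q, r] := by
  rcases Z₁ with _ | ⟨z, _ | ⟨z', _ | ⟨z'', Z₁⟩⟩⟩ <;>
    rcases X₁ with _ | ⟨x, _ | ⟨x', _ | ⟨x'', X₁⟩⟩⟩ <;> simp_all

end Aux
section Aux2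
variable {α S : Type*} [Semigroup S] {n : ℕ} {R : Set (List α × List α)}
  {f : List α → S} {T : Subsemigroup S} {s : Fin n → α}

/-! ### AT0 basics -/

lemma AT0_def {W : List α} (h : W ∈ AT0 f T s) :
    W ≠ [] ∧ f W ∈ T ∧
      ∀ Z₁ X₁ Z₂ : List α, X₁ ≠ [] → W = Z₁ ++ X₁ ++ Z₂ → f X₁ ∉ T → ∃ i, X₁ = [s i] := h

lemma AT0_factor_T {W Z₁ X₁ Z₂ : List α} (h : W ∈ AT0 f T s)
    (heq : W = Z₁ ++ X₁ ++ Z₂) (hlen : 2 ≤ X₁.length) : f X₁ ∈ T := by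
  by_contra hn
  obtain ⟨i, hi⟩ := h.2.2 Z₁ X₁ Z₂ (by intro h'; rw [h'] at hlen; simp at hlen) heq hn
  rw [hi] at hlen; simp at hlen

lemma AT0_single_T {W Z₁ Z₂ : List α} {c : α} (h : W ∈ AT0 f T s)
    (heq : W = Z₁ ++ [c] ++ Z₂) (hc : ¬ ∃ i, c = s i) : f [c] ∈ T := by
  by_contra hn
  obtain ⟨i, hi⟩ := h.2.2 Z₁ [c] Z₂ (by simp) heq hn
  exact hc ⟨i, by injection hi⟩

lemma AT0_infix {W Z₁ W' Z₂ : List α} (h : W ∈ AT0 f T s)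
    (heq : W = Z₁ ++ W' ++ Z₂) (hne : W' ≠ []) (hT : f W' ∈ T) : W' ∈ AT0 f T s := by
  refine ⟨hne, hT, fun Y₁ X₁ Y₂ hX hWeq hfn => ?_⟩
  refine h.2.2 (Z₁ ++ Y₁) X₁ (Y₂ ++ Z₂) hX ?_ hfn
  subst hWeq; rw [heq]; simp

/-! ### rhoT computation lemmas -/

lemma rho_two {a b : α} (h : (∃ i, a = s i) ∨ (∃ i, b = s i)) :
    rhoT s [a, b] = [Sum.inr [a, b]] := by
  simp only [rhoT]; rw [if_pos h]

lemma rho_two' {a b : α} (ha : ¬ ∃ i, a = s i) (hb : ¬ ∃ i, b = s i) :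
    rhoT s [a, b] = [Sum.inl a, Sum.inl b] := by
  simp only [rhoT]; rw [if_neg (by tauto)]

lemma rho_three {a b c : α} (ha : ∃ i, a = s i) (hc : ∃ i, c = s i) :
    rhoT s [a, b, c] = [Sum.inr [a, b, c]] := by
  simp only [rhoT]; rw [if_pos ha, if_pos hc]

lemma rho_cons_inl {a : α} {W₁ : List α} (ha : ¬ ∃ i, a = s i) (hne : W₁ ≠ [])
    (h1 : ∀ c, W₁ = [c] → ¬ ∃ i, c = s i) :
    rhoT s (a :: W₁) = Sum.inl a :: rhoT s W₁ := by
  match W₁ with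
  | [] => exact absurd rfl hne
  | [b] =>
      have hb := h1 b rfl
      simp only [rhoT]; rw [if_neg (by tauto)]
  | [b, c] => simp only [rhoT]; rw [if_neg ha]
  | b :: c :: d :: rest => simp only [rhoT]; rw [if_neg ha]

lemma rho_cons_pair {a b : α} {W₂ : List α} (ha : ∃ i, a = s i)
    (h1 : ∀ c, W₂ = [c] → ¬ ∃ i, c = s i) :
    rhoT s (a :: b :: W₂) = Sum.inr [a, b] :: rhoT s W₂ := by
  match W₂ with
  | [] => simp only [rhoT]; rw [if_pos (Or.inl ha)]
  | [c] =>
      simp only [rhoT]; rw [if_pos ha, if_neg (h1 c rfl)]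
  | c :: d :: rest => simp only [rhoT]; rw [if_pos ha]

lemma rho_ne_nil {W : List α} (hW : W ≠ []) : rhoT s W ≠ [] := by
  match W with
  | [a] => simp [rhoT]
  | [a, b] => simp only [rhoT]; split <;> simp
  | [a, b, c] => simp only [rhoT]; split <;> [skip; simp] <;> split <;> simp
  | a :: b :: c :: d :: rest => simp only [rhoT]; split <;> simp

lemma rho_phi : ∀ W : List α, phiT (rhoT s W) = W := by
  intro W
  induction W using rhoT.induct (s := s) <;>
    simp_all [rhoT, phiT] <;> split <;> simp_all [phiT] <;> split <;> simp_all [phiT]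

end Aux2
section Aux3
variable {α S : Type*} [Semigroup S] {n : ℕ} {R : Set (List α × List α)}
  {f : List α → S} {T : Subsemigroup S} {s : Fin n → α}

lemma BSet_cases {x : α ⊕ List α} (hx : x ∈ BSet f T s) :
    (∃ a, f [a] ∈ T ∧ x = Sum.inl a) ∨
    (∃ a i, f [a] ∈ T ∧ x = Sum.inr [a, s i]) ∨
    (∃ i b, x = Sum.inr [s i, b]) ∨
    (∃ i b j, x = Sum.inr [s i, b, s j]) := by
  rcases hx with ((((h | h) | h) | h) | h) | h
  · obtain ⟨a, h1, rfl⟩ := h; exact Or.inl ⟨a, h1, rfl⟩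
  · obtain ⟨a, i, h1, h2, rfl⟩ := h; exact Or.inr (Or.inl ⟨a, i, h1, rfl⟩)
  · obtain ⟨i, a, h1, h2, rfl⟩ := h; exact Or.inr (Or.inr (Or.inl ⟨i, a, rfl⟩))
  · obtain ⟨i, j, h1, rfl⟩ := h; exact Or.inr (Or.inr (Or.inl ⟨i, s j, rfl⟩))
  · obtain ⟨i, a, j, _, _, _, _, rfl⟩ := h; exact Or.inr (Or.inr (Or.inr ⟨i, a, j, rfl⟩))
  · obtain ⟨i, j, k, _, _, _, rfl⟩ := h; exact Or.inr (Or.inr (Or.inr ⟨i, s j, k, rfl⟩))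

lemma mem_BSet_inl {a : α} (h : f [a] ∈ T) : (Sum.inl a : α ⊕ List α) ∈ BSet f T s := by
  simp only [BSet, A1', Set.mem_union, Set.mem_setOf_eq]
  exact Or.inl (Or.inl (Or.inl (Or.inl (Or.inl ⟨a, h, rfl⟩))))

lemma mem_BSet_CR {a : α} {i : Fin n} (h1 : f [a] ∈ T) (h2 : f [a, s i] ∈ T) :
    (Sum.inr [a, s i] : α ⊕ List α) ∈ BSet f T s := by
  simp only [BSet, CR, Set.mem_union, Set.mem_setOf_eq]
  exact Or.inl (Or.inl (Or.inl (Or.inl (Or.inr ⟨a, i, h1, h2, rfl⟩))))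

lemma mem_BSet_CL1 {a : α} {i : Fin n} (h1 : f [a] ∈ T) (h2 : f [s i, a] ∈ T) :
    (Sum.inr [s i, a] : α ⊕ List α) ∈ BSet f T s := by
  simp only [BSet, CL1, Set.mem_union, Set.mem_setOf_eq]
  exact Or.inl (Or.inl (Or.inl (Or.inr ⟨i, a, h1, h2, rfl⟩)))

lemma mem_BSet_CL2 {i j : Fin n} (h1 : f [s i, s j] ∈ T) :
    (Sum.inr [s i, s j] : α ⊕ List α) ∈ BSet f T s := by
  simp only [BSet, CL2, Set.mem_union, Set.mem_setOf_eq]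
  exact Or.inl (Or.inl (Or.inr ⟨i, j, h1, rfl⟩))

lemma mem_BSet_CM1 {a : α} {i j : Fin n} (h0 : f [a] ∈ T) (h1 : f [s i, a, s j] ∈ T)
    (h2 : f [s i, a] ∈ T) (h3 : f [a, s j] ∈ T) :
    (Sum.inr [s i, a, s j] : α ⊕ List α) ∈ BSet f T s := by
  simp only [BSet, CM1, Set.mem_union, Set.mem_setOf_eq]
  exact Or.inl (Or.inr ⟨i, a, j, h0, h1, h2, h3, rfl⟩)

lemma mem_BSet_CM2 {i j k : Fin n} (h1 : f [s i, s j, s k] ∈ T) (h2 : f [s i, s j] ∈ T)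
    (h3 : f [s j, s k] ∈ T) :
    (Sum.inr [s i, s j, s k] : α ⊕ List α) ∈ BSet f T s := by
  simp only [BSet, CM2, Set.mem_union, Set.mem_setOf_eq]
  exact Or.inr ⟨i, j, k, h1, h2, h3, rfl⟩

/-- If the image of a nonempty `B`-word is a single letter, that letter comes from
a letter of `A₁`. -/
lemma phi_single {x₂ : α ⊕ List α} {V : List (α ⊕ List α)} {c : α}
    (hx : x₂ ∈ BSet f T s) (h : phiT (x₂ :: V) = [c]) : f [c] ∈ T := by
  rcases BSet_cases hx with ⟨a, h1, rfl⟩ | ⟨a, i, h1, rfl⟩ | ⟨i, b, rfl⟩ | ⟨i, b, j, rfl⟩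
  · rw [phiT_inl] at h
    obtain ⟨rfl, -⟩ := List.cons_eq_cons.mp h
    exact h1
  all_goals (rw [phiT_inr] at h; simp at h)

lemma phiT_cons_ne {x : α ⊕ List α} {V : List (α ⊕ List α)}
    (hx : x ∈ BSet f T s) : phiT (x :: V) ≠ [] := by
  rcases BSet_cases hx with ⟨a, h1, rfl⟩ | ⟨a, i, h1, rfl⟩ | ⟨i, b, rfl⟩ | ⟨i, b, j, rfl⟩ <;>
    simp [phiT_inl, phiT_inr]

/-- letters of `ρ(W)` lie in `B`, for `W ∈ A(T)(0)`. -/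
lemma rho_mem_BSet :
    ∀ k (W : List α), W.length ≤ k → W ∈ AT0 f T s → ∀ x ∈ rhoT s W, x ∈ BSet f T s := by
  intro k
  induction k with
  | zero => intro W hlen hW; exact absurd (List.length_eq_zero_iff.mp (Nat.le_zero.mp hlen)) hW.1
  | succ k ih =>
    intro W hlen hW x hx
    match W with
    | [] => exact absurd rfl hW.1
    | [a] =>
      simp only [rhoT, List.mem_singleton] at hx
      subst hx; exact mem_BSet_inl hW.2.1
    | [a, b] =>
      by_cases Pa : ∃ i, a = s i
      · obtain ⟨i, rfl⟩ := Pa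
        by_cases Pb : ∃ j, b = s j
        · obtain ⟨j, rfl⟩ := Pb
          rw [rho_two (Or.inl ⟨i, rfl⟩)] at hx
          simp only [List.mem_singleton] at hx; subst hx
          exact mem_BSet_CL2 hW.2.1
        · rw [rho_two (Or.inl ⟨i, rfl⟩)] at hx
          simp only [List.mem_singleton] at hx; subst hx
          exact mem_BSet_CL1 (AT0_single_T hW (Z₁ := [s i]) (Z₂ := []) (by simp) Pb) hW.2.1
      · by_cases Pb : ∃ j, b = s j
        · obtain ⟨j, rfl⟩ := Pb
          rw [rho_two (Or.inr ⟨j, rfl⟩)] at hx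
          simp only [List.mem_singleton] at hx; subst hx
          exact mem_BSet_CR (AT0_single_T hW (Z₁ := []) (Z₂ := [s j]) (by simp) Pa) hW.2.1
        · rw [rho_two' Pa Pb] at hx
          have ha := AT0_single_T hW (Z₁ := []) (Z₂ := [b]) (by simp) Pa
          have hb := AT0_single_T hW (Z₁ := [a]) (Z₂ := []) (by simp) Pb
          simp only [List.mem_cons, List.not_mem_nil, or_false, List.mem_singleton] at hx
          rcases hx with rfl | rfl
          · exact mem_BSet_inl ha
          · exact mem_BSet_inl hb
    | [a, b, c] =>
      have hab : f [a, b] ∈ T := AT0_factor_T hW (Z₁ := []) (Z₂ := [c]) (by simp) (by simp)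
      have hbc : f [b, c] ∈ T := AT0_factor_T hW (Z₁ := [a]) (Z₂ := []) (by simp) (by simp)
      by_cases Pa : ∃ i, a = s i
      · obtain ⟨i, rfl⟩ := Pa
        by_cases Pc : ∃ j, c = s j
        · obtain ⟨j, rfl⟩ := Pc
          rw [rho_three ⟨i, rfl⟩ ⟨j, rfl⟩] at hx
          simp only [List.mem_singleton] at hx; subst hx
          by_cases Pb : ∃ m, b = s m
          · obtain ⟨m, rfl⟩ := Pb
            exact mem_BSet_CM2 hW.2.1 hab hbc
          · exact mem_BSet_CM1 (AT0_single_T hW (Z₁ := [s i]) (Z₂ := [s j]) (by simp) Pb)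
              hW.2.1 hab hbc
        · rw [rho_cons_pair ⟨i, rfl⟩ (by rintro c' ⟨rfl⟩; exact Pc)] at hx
          rcases List.mem_cons.mp hx with rfl | hx
          · by_cases Pb : ∃ m, b = s m
            · obtain ⟨m, rfl⟩ := Pb; exact mem_BSet_CL2 hab
            · exact mem_BSet_CL1 (AT0_single_T hW (Z₁ := [s i]) (Z₂ := [c]) (by simp) Pb) hab
          · have hc : f [c] ∈ T := AT0_single_T hW (Z₁ := [s i, b]) (Z₂ := []) (by simp) Pc
            exact ih [c] (by simp at hlen ⊢; omega) ⟨by simp, hc, fun Z₁ X₁ Z₂ hX heq hfn =>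
              absurd (factor1 heq hX ▸ hfn) (by simp [hc])⟩ x hx
      · rw [rho_cons_inl Pa (by simp) (by rintro c' ⟨⟩)] at hx
        rcases List.mem_cons.mp hx with rfl | hx
        · exact mem_BSet_inl (AT0_single_T hW (Z₁ := []) (Z₂ := [b, c]) (by simp) Pa)
        · exact ih [b, c] (by simp at hlen ⊢; omega)
            (AT0_infix hW (Z₁ := [a]) (Z₂ := []) (by simp) (by simp) hbc) x hx
    | a :: b :: c :: d :: rest =>
      by_cases Pa : ∃ i, a = s i
      · obtain ⟨i, rfl⟩ := Pa
        have hab : f [s i, b] ∈ T :=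
          AT0_factor_T hW (Z₁ := []) (Z₂ := c :: d :: rest) (by simp) (by simp)
        have hW₂ : (c :: d :: rest) ∈ AT0 f T s := by
          refine AT0_infix hW (Z₁ := [s i, b]) (Z₂ := []) (by simp) (by simp) ?_
          exact AT0_factor_T hW (Z₁ := [s i, b]) (Z₂ := []) (by simp) (by simp)
        rw [rho_cons_pair ⟨i, rfl⟩ (by rintro c' ⟨⟩)] at hx
        rcases List.mem_cons.mp hx with rfl | hx
        · by_cases Pb : ∃ m, b = s m
          · obtain ⟨m, rfl⟩ := Pb; exact mem_BSet_CL2 hab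
          · exact mem_BSet_CL1
              (AT0_single_T hW (Z₁ := [s i]) (Z₂ := c :: d :: rest) (by simp) Pb) hab
        · exact ih _ (by simp at hlen ⊢; omega) hW₂ x hx
      · rw [rho_cons_inl Pa (by simp) (by rintro c' ⟨⟩)] at hx
        rcases List.mem_cons.mp hx with rfl | hx
        · exact mem_BSet_inl
            (AT0_single_T hW (Z₁ := []) (Z₂ := b :: c :: d :: rest) (by simp) Pa)
        · refine ih _ (by simp at hlen ⊢; omega)
            (AT0_infix hW (Z₁ := [a]) (Z₂ := []) (by simp) (by simp) ?_) x hx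
          exact AT0_factor_T hW (Z₁ := [a]) (Z₂ := []) (by simp) (by simp)

end Aux3
section Aux4
variable {α S : Type*} [Semigroup S] {n : ℕ} {R : Set (List α × List α)}
  {f : List α → S} {T : Subsemigroup S} {s : Fin n → α}

lemma ATn_one : ATn f T s 1 = F1 f T ∪ F2 f T s ∪ F3 f T s ∪ F4 f T s := rfl

lemma ATn_succ_succ (i : ℕ) : ATn f T s (i + 2) =
    (⋃ a ∈ A1 f T, ({W | ∃ V ∈ ATn f T s (i + 1), W = a :: V} ∩ AT0 f T s)) ∪
    (⋃ X ∈ F2 f T s, ({W | ∃ V ∈ ATn f T s (i + 1), W = X ++ V} ∩ AT0 f T s)) := rfl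

lemma mem_ATset_of {W : List α} {i : ℕ} (h : W ∈ ATn f T s (i + 1)) : W ∈ ATset f T s :=
  Set.mem_iUnion.2 ⟨i, h⟩

lemma F1_subset_AT0 : F1 f T ⊆ AT0 f T s := by
  rintro W ⟨a, h1, rfl⟩
  refine ⟨by simp, h1, fun Z₁ X₁ Z₂ hX heq hfn => absurd ((factor1 heq hX) ▸ hfn) (by simp [h1])⟩

lemma F2_subset_AT0 : F2 f T s ⊆ AT0 f T s := by
  rintro W ⟨i, b, hb, h2, rfl⟩
  refine ⟨by simp, h2, fun Z₁ X₁ Z₂ hX heq hfn => ?_⟩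
  rcases factor2 heq hX with rfl | rfl | rfl
  · exact ⟨i, rfl⟩
  · rcases hb with hb | ⟨j, rfl⟩
    · exact absurd hb hfn
    · exact ⟨j, rfl⟩
  · exact absurd h2 hfn

lemma F3_subset_AT0 : F3 f T s ⊆ AT0 f T s := by
  rintro W ⟨a, i, h1, h2, rfl⟩
  refine ⟨by simp, h2, fun Z₁ X₁ Z₂ hX heq hfn => ?_⟩
  rcases factor2 heq hX with rfl | rfl | rfl
  · exact absurd h1 hfn
  · exact ⟨i, rfl⟩
  · exact absurd h2 hfn

lemma F4_subset_AT0 : F4 f T s ⊆ AT0 f T s := by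
  rintro W ⟨i, b, j, hb, h1, h2, h3, rfl⟩
  refine ⟨by simp, h3, fun Z₁ X₁ Z₂ hX heq hfn => ?_⟩
  rcases factor3 heq hX with rfl | rfl | rfl | rfl | rfl | rfl
  · exact ⟨i, rfl⟩
  · rcases hb with hb | ⟨m, rfl⟩
    · exact absurd hb hfn
    · exact ⟨m, rfl⟩
  · exact ⟨j, rfl⟩
  · exact absurd h1 hfn
  · exact absurd h2 hfn
  · exact absurd h3 hfn

lemma ATset_subset_AT0 : ATset f T s ⊆ AT0 f T s := by
  intro W hW
  obtain ⟨i, hi⟩ := Set.mem_iUnion.mp hW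
  match i with
  | 0 =>
    rcases hi with ((h | h) | h) | h
    exacts [F1_subset_AT0 h, F2_subset_AT0 h, F3_subset_AT0 h, F4_subset_AT0 h]
  | j + 1 =>
    rw [ATn_succ_succ] at hi
    rcases hi with h | h
    · obtain ⟨a, -, -, h2⟩ := Set.mem_iUnion₂.mp h
      exact h2
    · obtain ⟨X, -, -, h2⟩ := Set.mem_iUnion₂.mp h
      exact h2

lemma AT0_subset_ATset :
    ∀ k (W : List α), W.length ≤ k → W ∈ AT0 f T s → W ∈ ATset f T s := by
  intro k
  induction k with
  | zero => intro W hlen hW; exact absurd (List.length_eq_zero_iff.mp (Nat.le_zero.mp hlen)) hW.1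
  | succ k ih =>
    intro W hlen hW
    match W with
    | [] => exact absurd rfl hW.1
    | [a] =>
      exact mem_ATset_of (i := 0) (Or.inl (Or.inl (Or.inl ⟨a, hW.2.1, rfl⟩)))
    | [a, b] =>
      by_cases Pa : ∃ i, a = s i
      · obtain ⟨i, rfl⟩ := Pa
        refine mem_ATset_of (i := 0) (Or.inl (Or.inl (Or.inr ⟨i, b, ?_, hW.2.1, rfl⟩)))
        by_cases Pb : ∃ j, b = s j
        · exact Or.inr Pb
        · exact Or.inl (AT0_single_T hW (Z₁ := [s i]) (Z₂ := []) (by simp) Pb)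
      · have ha : f [a] ∈ T := AT0_single_T hW (Z₁ := []) (Z₂ := [b]) (by simp) Pa
        by_cases Pb : ∃ j, b = s j
        · obtain ⟨j, rfl⟩ := Pb
          exact mem_ATset_of (i := 0) (Or.inl (Or.inr ⟨a, j, ha, hW.2.1, rfl⟩))
        · have hb : f [b] ∈ T := AT0_single_T hW (Z₁ := [a]) (Z₂ := []) (by simp) Pb
          refine mem_ATset_of (i := 1) ?_
          rw [ATn_succ_succ]
          refine Or.inl (Set.mem_iUnion₂.mpr ⟨a, ha, ⟨[b], ?_, rfl⟩, hW⟩)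
          exact Or.inl (Or.inl (Or.inl ⟨b, hb, rfl⟩))
    | a :: b :: c :: W₃ =>
      by_cases Pa : ∃ i, a = s i
      · obtain ⟨i, rfl⟩ := Pa
        have hab : f [s i, b] ∈ T :=
          AT0_factor_T hW (Z₁ := []) (Z₂ := c :: W₃) (by simp) (by simp)
        have hbcond : f [b] ∈ T ∨ ∃ j, b = s j := by
          by_cases Pb : ∃ j, b = s j
          · exact Or.inr Pb
          · exact Or.inl (AT0_single_T hW (Z₁ := [s i]) (Z₂ := c :: W₃) (by simp) Pb)
        match W₃ with
        | [] =>
          by_cases Pc : ∃ j, c = s j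
          · obtain ⟨j, rfl⟩ := Pc
            refine mem_ATset_of (i := 0)
              (Or.inr ⟨i, b, j, hbcond, hab, ?_, hW.2.1, rfl⟩)
            exact AT0_factor_T hW (Z₁ := [s i]) (Z₂ := []) (by simp) (by simp)
          · have hc : f [c] ∈ T := AT0_single_T hW (Z₁ := [s i, b]) (Z₂ := []) (by simp) Pc
            refine mem_ATset_of (i := 1) ?_
            rw [ATn_succ_succ]
            refine Or.inr (Set.mem_iUnion₂.mpr ⟨[s i, b], ⟨i, b, hbcond, hab, rfl⟩,
              ⟨[c], ?_, rfl⟩, hW⟩)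
            exact Or.inl (Or.inl (Or.inl ⟨c, hc, rfl⟩))
        | d :: W₄ =>
          have hW₂ : (c :: d :: W₄) ∈ AT0 f T s := by
            refine AT0_infix hW (Z₁ := [s i, b]) (Z₂ := []) (by simp) (by simp) ?_
            exact AT0_factor_T hW (Z₁ := [s i, b]) (Z₂ := []) (by simp) (by simp)
          obtain ⟨m, hm⟩ := Set.mem_iUnion.mp (ih _ (by simp at hlen ⊢; omega) hW₂)
          refine mem_ATset_of (i := m + 1) ?_
          rw [ATn_succ_succ]
          exact Or.inr (Set.mem_iUnion₂.mpr ⟨[s i, b], ⟨i, b, hbcond, hab, rfl⟩,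
            ⟨c :: d :: W₄, hm, rfl⟩, hW⟩)
      · have ha : f [a] ∈ T := AT0_single_T hW (Z₁ := []) (Z₂ := b :: c :: W₃) (by simp) Pa
        have hW₁ : (b :: c :: W₃) ∈ AT0 f T s := by
          refine AT0_infix hW (Z₁ := [a]) (Z₂ := []) (by simp) (by simp) ?_
          exact AT0_factor_T hW (Z₁ := [a]) (Z₂ := []) (by simp) (by simp)
        obtain ⟨m, hm⟩ := Set.mem_iUnion.mp (ih _ (by simp at hlen ⊢; omega) hW₁)
        refine mem_ATset_of (i := m + 1) ?_
        rw [ATn_succ_succ]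
        exact Or.inl (Set.mem_iUnion₂.mpr ⟨a, ha, ⟨b :: c :: W₃, hm, rfl⟩, hW⟩)

end Aux4
section Aux5
variable {α S : Type*} [Semigroup S] {n : ℕ} {R : Set (List α × List α)}
  {f : List α → S} {T : Subsemigroup S} {s : Fin n → α}

lemma steps_cons {γ : Type*} {R' : Set (List γ × List γ)} (c : γ) {u v : List γ}
    (h : Steps R' u v) : Steps R' (c :: u) (c :: v) := by
  induction h with
  | refl => exact .refl
  | tail _ h2 ih =>
    obtain ⟨Z₁, Z₂, X, Y, hr, e1, e2⟩ := h2
    exact ih.tail ⟨c :: Z₁, Z₂, X, Y, hr, by simp [e1], by simp [e2]⟩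

lemma step_D2 {x₁ x₂ : α ⊕ List α} {V : List (α ⊕ List α)}
    (hB1 : x₁ ∈ BSet f T s) (hB2 : x₂ ∈ BSet f T s)
    (hAT : phiT [x₁, x₂] ∈ ATset f T s)
    (hneq : [x₁, x₂] ≠ rhoT s (phiT [x₁, x₂])) :
    Step (RT R f T s) (x₁ :: x₂ :: V) (rhoT s (phiT [x₁, x₂]) ++ V) := by
  refine ⟨[], V, [x₁, x₂], rhoT s (phiT [x₁, x₂]), Or.inr ?_, by simp, by simp⟩
  refine ⟨[x₁, x₂], ?_, rfl, hAT, hneq, rfl⟩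
  intro x hx
  simp only [List.mem_cons, List.not_mem_nil, or_false, List.mem_singleton] at hx
  rcases hx with rfl | rfl
  · exact hB1
  · exact hB2

lemma phi_tail_AT0 {x₂ : α ⊕ List α} {V : List (α ⊕ List α)} {W : List α} {Z₁ : List α}
    (hx₂ : x₂ ∈ BSet f T s) (hW : W ∈ AT0 f T s) (heq : W = Z₁ ++ phiT (x₂ :: V)) :
    phiT (x₂ :: V) ∈ AT0 f T s := by
  have hT : f (phiT (x₂ :: V)) ∈ T := by
    rcases hE : phiT (x₂ :: V) with _ | ⟨c, _ | ⟨d, rest⟩⟩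
    · exact absurd hE (phiT_cons_ne hx₂)
    · exact phi_single hx₂ hE
    · exact AT0_factor_T hW (Z₁ := Z₁) (Z₂ := []) (by rw [heq, hE]; simp) (by simp)
  exact AT0_infix hW (Z₁ := Z₁) (Z₂ := []) (by rw [heq]; simp) (phiT_cons_ne hx₂) hT

lemma main_aux (hsT : ∀ i : Fin n, f [s i] ∉ T) :
    ∀ k (U' : List (α ⊕ List α)), (phiT U').length ≤ k → U' ≠ [] →
      (∀ x ∈ U', x ∈ BSet f T s) → phiT U' ∈ AT0 f T s →
      Steps (RT R f T s) U' (rhoT s (phiT U')) := by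
  have notP : ∀ {a : α}, f [a] ∈ T → ¬ ∃ i, a = s i := by
    rintro a h ⟨i, rfl⟩; exact hsT i h
  intro k
  induction k with
  | zero =>
    intro U' hlen hne hB hW
    exact absurd (List.length_eq_zero_iff.mp (Nat.le_zero.mp hlen)) hW.1
  | succ k ih =>
    intro U' hlen hne hB hW
    match U' with
    | [] => exact absurd rfl hne
    | x₁ :: U'' =>
      have hx₁ : x₁ ∈ BSet f T s := hB x₁ (by simp)
      rcases BSet_cases hx₁ with ⟨a, haT, rfl⟩ | ⟨a, i, haT, rfl⟩ | ⟨i, b, rfl⟩ | ⟨i, b, j, rfl⟩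
      -- Case A : x₁ = inl a
      · match U'' with
        | [] =>
          show Steps _ _ (rhoT s (phiT [Sum.inl a]))
          rw [show phiT [Sum.inl a] = [a] from rfl, show rhoT s [a] = [Sum.inl a] from by
            simp [rhoT]]
          exact Relation.ReflTransGen.refl
        | x₂ :: V =>
          have hPa := notP haT
          have hx₂ : x₂ ∈ BSet f T s := hB x₂ (by simp)
          have hWeq : phiT (Sum.inl a :: x₂ :: V) = a :: phiT (x₂ :: V) := rfl
          have hW₁ne : phiT (x₂ :: V) ≠ [] := phiT_cons_ne hx₂
          have hsingle : ∀ c, phiT (x₂ :: V) = [c] → ¬ ∃ m, c = s m :=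
            fun c hc => notP (phi_single hx₂ hc)
          have hW₁AT0 : phiT (x₂ :: V) ∈ AT0 f T s :=
            phi_tail_AT0 hx₂ hW (Z₁ := [a]) (by rw [hWeq]; simp)
          have hlen₁ : (phiT (x₂ :: V)).length ≤ k := by
            rw [hWeq] at hlen; simp at hlen; omega
          have IH := ih (x₂ :: V) hlen₁ (by simp) (fun x hx => hB x (by simp [hx])) hW₁AT0
          rw [hWeq, rho_cons_inl hPa hW₁ne hsingle]
          exact steps_cons _ IH
      -- Case B : x₁ = inr [a, s i]
      · match U'' with
        | [] =>
          show Steps _ _ (rhoT s (phiT [Sum.inr [a, s i]]))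
          rw [show phiT [Sum.inr [a, s i]] = [a, s i] from by simp [phiT],
            rho_two (Or.inr ⟨i, rfl⟩)]
          exact Relation.ReflTransGen.refl
        | x₂ :: V =>
          have hPa := notP haT
          have hx₂ : x₂ ∈ BSet f T s := hB x₂ (by simp)
          have hφx₂ne : phiT [x₂] ≠ [] := phiT_cons_ne hx₂
          have hWeq : phiT (Sum.inr [a, s i] :: x₂ :: V)
              = a :: (s i :: (phiT [x₂] ++ phiT V)) := by
            rw [show (x₂ :: V) = [x₂] ++ V from rfl, phiT_inr, phiT_append]; rfl
          have hsing : ∀ c, (s i :: phiT [x₂]) = [c] → ¬ ∃ m, c = s m := by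
            intro c hc hm
            injection hc with h1 h2
            exact hφx₂ne h2
          have hWpeq : phiT [Sum.inr [a, s i], x₂] = a :: (s i :: phiT [x₂]) := rfl
          -- the prefix phiT [x₁, x₂] is in AT0, hence in ATset
          have hpre : phiT (Sum.inr [a, s i] :: x₂ :: V)
              = phiT [Sum.inr [a, s i], x₂] ++ phiT V := by
            rw [show (Sum.inr [a, s i] :: x₂ :: V : List (α ⊕ List α))
              = [Sum.inr [a, s i], x₂] ++ V from rfl, phiT_append]
          have hWpAT0 : phiT [Sum.inr [a, s i], x₂] ∈ AT0 f T s := by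
            refine AT0_infix hW (Z₁ := []) (Z₂ := phiT V) (by rw [hpre]; simp)
              (by rw [hWpeq]; simp) ?_
            exact AT0_factor_T hW (Z₁ := []) (Z₂ := phiT V) (by rw [hpre]; simp)
              (by rw [hWpeq]; simp)
          have hWpATset : phiT [Sum.inr [a, s i], x₂] ∈ ATset f T s :=
            AT0_subset_ATset _ _ le_rfl hWpAT0
          have hE : rhoT s (phiT [Sum.inr [a, s i], x₂])
              = Sum.inl a :: rhoT s (s i :: phiT [x₂]) := by
            rw [hWpeq, rho_cons_inl hPa (by simp) hsing]
          have hneq : ([Sum.inr [a, s i], x₂] : List (α ⊕ List α))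
              ≠ rhoT s (phiT [Sum.inr [a, s i], x₂]) := by
            rw [hE]; intro h; injection h with h1 _; exact absurd h1 (by simp)
          have step1 : Step (RT R f T s) (Sum.inr [a, s i] :: x₂ :: V)
              (Sum.inl a :: (rhoT s (s i :: phiT [x₂]) ++ V)) := by
            have := step_D2 (R := R) (V := V) hx₁ hx₂ hWpATset hneq
            rwa [hE, List.cons_append] at this
          -- the new suffix word U₂
          have hmidAT0 : (s i :: phiT [x₂]) ∈ AT0 f T s := by
            refine AT0_infix hW (Z₁ := [a]) (Z₂ := phiT V)
              (by rw [hWeq]; simp) (by simp) ?_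
            exact AT0_factor_T hW (Z₁ := [a]) (Z₂ := phiT V) (by rw [hWeq]; simp) (by have := List.length_pos_iff.mpr hφx₂ne; simp at this ⊢; omega)
          have hU₂B : ∀ x ∈ rhoT s (s i :: phiT [x₂]) ++ V, x ∈ BSet f T s := by
            intro x hx
            rcases List.mem_append.mp hx with hx | hx
            · exact rho_mem_BSet _ _ le_rfl hmidAT0 x hx
            · exact hB x (by simp [hx])
          have hφU₂ : phiT (rhoT s (s i :: phiT [x₂]) ++ V)
              = s i :: (phiT [x₂] ++ phiT V) := by
            rw [phiT_append, rho_phi]; rfl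
          have hU₂ne : rhoT s (s i :: phiT [x₂]) ++ V ≠ [] := by
            intro h
            exact rho_ne_nil (by simp) (List.append_eq_nil_iff.mp h).1
          have hW₁AT0 : (s i :: (phiT [x₂] ++ phiT V)) ∈ AT0 f T s := by
            refine AT0_infix hW (Z₁ := [a]) (Z₂ := []) (by rw [hWeq]; simp) (by simp) ?_
            exact AT0_factor_T hW (Z₁ := [a]) (Z₂ := []) (by rw [hWeq]; simp) (by have := List.length_pos_iff.mpr hφx₂ne; simp at this ⊢; omega)
          have hlen₂ : (phiT (rhoT s (s i :: phiT [x₂]) ++ V)).length ≤ k := by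
            rw [hφU₂]; rw [hWeq] at hlen; simp at hlen ⊢; omega
          have IH := ih _ hlen₂ hU₂ne hU₂B (by rw [hφU₂]; exact hW₁AT0)
          rw [hφU₂] at IH
          have hfin : rhoT s (phiT (Sum.inr [a, s i] :: x₂ :: V))
              = Sum.inl a :: rhoT s (s i :: (phiT [x₂] ++ phiT V)) := by
            rw [hWeq]
            refine rho_cons_inl hPa (by simp) ?_
            intro c hc hm
            injection hc with h1 h2
            exact hφx₂ne (List.append_eq_nil_iff.mp h2).1
          rw [hfin]
          exact Relation.ReflTransGen.head step1 (steps_cons _ IH)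
      -- Case C : x₁ = inr [s i, b]
      · match U'' with
        | [] =>
          show Steps _ _ (rhoT s (phiT [Sum.inr [s i, b]]))
          rw [show phiT [Sum.inr [s i, b]] = [s i, b] from by simp [phiT],
            rho_two (Or.inl ⟨i, rfl⟩)]
          exact Relation.ReflTransGen.refl
        | x₂ :: V =>
          have hx₂ : x₂ ∈ BSet f T s := hB x₂ (by simp)
          have hWeq : phiT (Sum.inr [s i, b] :: x₂ :: V) = s i :: b :: phiT (x₂ :: V) := rfl
          have hW₂ne : phiT (x₂ :: V) ≠ [] := phiT_cons_ne hx₂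
          have hsingle : ∀ c, phiT (x₂ :: V) = [c] → ¬ ∃ m, c = s m :=
            fun c hc => notP (phi_single hx₂ hc)
          have hW₂AT0 : phiT (x₂ :: V) ∈ AT0 f T s :=
            phi_tail_AT0 hx₂ hW (Z₁ := [s i, b]) (by rw [hWeq]; rfl)
          have hlen₂ : (phiT (x₂ :: V)).length ≤ k := by
            rw [hWeq] at hlen; simp at hlen; omega
          have IH := ih (x₂ :: V) hlen₂ (by simp) (fun x hx => hB x (by simp [hx])) hW₂AT0
          rw [hWeq, rho_cons_pair ⟨i, rfl⟩ hsingle]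
          exact steps_cons _ IH
      -- Case D : x₁ = inr [s i, b, s j]
      · match U'' with
        | [] =>
          show Steps _ _ (rhoT s (phiT [Sum.inr [s i, b, s j]]))
          rw [show phiT [Sum.inr [s i, b, s j]] = [s i, b, s j] from by simp [phiT],
            rho_three ⟨i, rfl⟩ ⟨j, rfl⟩]
          exact Relation.ReflTransGen.refl
        | x₂ :: V =>
          have hx₂ : x₂ ∈ BSet f T s := hB x₂ (by simp)
          have hφx₂ne : phiT [x₂] ≠ [] := phiT_cons_ne hx₂
          have hWeq : phiT (Sum.inr [s i, b, s j] :: x₂ :: V)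
              = s i :: b :: (s j :: (phiT [x₂] ++ phiT V)) := by
            rw [show (x₂ :: V) = [x₂] ++ V from rfl, phiT_inr, phiT_append]; rfl
          have hsing : ∀ c, (s j :: phiT [x₂]) = [c] → ¬ ∃ m, c = s m := by
            intro c hc hm
            injection hc with h1 h2
            exact hφx₂ne h2
          have hWpeq : phiT [Sum.inr [s i, b, s j], x₂]
              = s i :: b :: (s j :: phiT [x₂]) := rfl
          have hpre : phiT (Sum.inr [s i, b, s j] :: x₂ :: V)
              = phiT [Sum.inr [s i, b, s j], x₂] ++ phiT V := by
            rw [show (Sum.inr [s i, b, s j] :: x₂ :: V : List (α ⊕ List α))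
              = [Sum.inr [s i, b, s j], x₂] ++ V from rfl, phiT_append]
          have hWpAT0 : phiT [Sum.inr [s i, b, s j], x₂] ∈ AT0 f T s := by
            refine AT0_infix hW (Z₁ := []) (Z₂ := phiT V) (by rw [hpre]; simp)
              (by rw [hWpeq]; simp) ?_
            exact AT0_factor_T hW (Z₁ := []) (Z₂ := phiT V) (by rw [hpre]; simp)
              (by rw [hWpeq]; simp)
          have hWpATset : phiT [Sum.inr [s i, b, s j], x₂] ∈ ATset f T s :=
            AT0_subset_ATset _ _ le_rfl hWpAT0
          have hE : rhoT s (phiT [Sum.inr [s i, b, s j], x₂])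
              = Sum.inr [s i, b] :: rhoT s (s j :: phiT [x₂]) := by
            rw [hWpeq, rho_cons_pair ⟨i, rfl⟩ hsing]
          have hneq : ([Sum.inr [s i, b, s j], x₂] : List (α ⊕ List α))
              ≠ rhoT s (phiT [Sum.inr [s i, b, s j], x₂]) := by
            rw [hE]; intro h; injection h with h1 _
            injection h1 with h1
            exact absurd h1 (by simp)
          have step1 : Step (RT R f T s) (Sum.inr [s i, b, s j] :: x₂ :: V)
              (Sum.inr [s i, b] :: (rhoT s (s j :: phiT [x₂]) ++ V)) := by
            have := step_D2 (R := R) (V := V) hx₁ hx₂ hWpATset hneq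
            rwa [hE, List.cons_append] at this
          have hmidAT0 : (s j :: phiT [x₂]) ∈ AT0 f T s := by
            refine AT0_infix hW (Z₁ := [s i, b]) (Z₂ := phiT V)
              (by rw [hWeq]; simp) (by simp) ?_
            exact AT0_factor_T hW (Z₁ := [s i, b]) (Z₂ := phiT V) (by rw [hWeq]; simp)
              (by have := List.length_pos_iff.mpr hφx₂ne; simp at this ⊢; omega)
          have hU₂B : ∀ x ∈ rhoT s (s j :: phiT [x₂]) ++ V, x ∈ BSet f T s := by
            intro x hx
            rcases List.mem_append.mp hx with hx | hx
            · exact rho_mem_BSet _ _ le_rfl hmidAT0 x hx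
            · exact hB x (by simp [hx])
          have hφU₂ : phiT (rhoT s (s j :: phiT [x₂]) ++ V)
              = s j :: (phiT [x₂] ++ phiT V) := by
            rw [phiT_append, rho_phi]; rfl
          have hU₂ne : rhoT s (s j :: phiT [x₂]) ++ V ≠ [] := by
            intro h
            exact rho_ne_nil (by simp) (List.append_eq_nil_iff.mp h).1
          have hW'AT0 : (s j :: (phiT [x₂] ++ phiT V)) ∈ AT0 f T s := by
            refine AT0_infix hW (Z₁ := [s i, b]) (Z₂ := []) (by rw [hWeq]; simp)
              (by simp) ?_
            exact AT0_factor_T hW (Z₁ := [s i, b]) (Z₂ := []) (by rw [hWeq]; simp) (by have := List.length_pos_iff.mpr hφx₂ne; simp at this ⊢; omega)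
          have hlen₂ : (phiT (rhoT s (s j :: phiT [x₂]) ++ V)).length ≤ k := by
            rw [hφU₂]; rw [hWeq] at hlen; simp at hlen ⊢; omega
          have IH := ih _ hlen₂ hU₂ne hU₂B (by rw [hφU₂]; exact hW'AT0)
          rw [hφU₂] at IH
          have hfin : rhoT s (phiT (Sum.inr [s i, b, s j] :: x₂ :: V))
              = Sum.inr [s i, b] :: rhoT s (s j :: (phiT [x₂] ++ phiT V)) := by
            rw [hWeq]
            refine rho_cons_pair ⟨i, rfl⟩ ?_
            intro c hc hm
            injection hc with h1 h2
            exact hφx₂ne (List.append_eq_nil_iff.mp h2).1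
          rw [hfin]
          exact Relation.ReflTransGen.head step1 (steps_cons _ IH)

end Aux5

/-- **Lemma 5.9** (Property (P6)). `U' →*_{R_T} ρ(φ(U'))` for all `U' ∈ B⁺` with
`φ(U') ∈ A(T)`. -/
theorem lemma_5_9
    {α S : Type*} [Semigroup S] (R : Set (List α × List α))
    (hαfin : Finite α) (hRfin : R.Finite) (hRWS : IsRWS R) (hcomp : CompleteRWS R)
    (f : List α → S) (hpres : Presents R f)
    (T : Subsemigroup S) {n : ℕ} (s : Fin n → α)
    -- (Q1): `S \ T = {[s₁]_R, …, [sₙ]_R}` with `s₁, …, sₙ ∈ Irr(R) ∩ A`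
    (hQ1irr : ∀ i : Fin n, Irr R [s i])
    (hQ1 : (T : Set S)ᶜ = {x | ∃ i : Fin n, x = f [s i]})
    -- (Q2): right-hand sides of rules are irreducible
    (hQ2 : ∀ X Y : List α, (X, Y) ∈ R → Irr R Y)
    -- (Q3): no left-hand side is reducible by another rule
    (hQ3 : ∀ X Y : List α, (X, Y) ∈ R → ¬ ∃ X' : List α, Step (R \ {(X, Y)}) X X')
    (U' : List (α ⊕ List α)) (hne : U' ≠ [])
    (hB : ∀ x ∈ U', x ∈ BSet f T s)
    (hφ : phiT U' ∈ ATset f T s) :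
    Steps (RT R f T s) U' (rhoT s (phiT U')) := by
  have hsT : ∀ i : Fin n, f [s i] ∉ T := by
    intro i hi
    have h : f [s i] ∈ (T : Set S)ᶜ := by rw [hQ1]; exact ⟨i, rfl⟩
    exact h hi
  exact main_aux hsT (phiT U').length U' le_rfl hne hB (ATset_subset_AT0 hφ)
end
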